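/- Let δ ∈ [0, 1/2], pz ∈ [0, 1], q ∈ [0, 1/2], and let X¹, X², N1, N2, Z, Q be mutually independent {0,1}-valued random variables with P(X¹=1) = P(X²=1) = 1/2, P(N1=1) = P(N2=1) = δ, P(Z=1) = pz and P(Q=1) = q. Define U = X², YR = (X¹ ⊕ N1 ⊕ Z, X² ⊕ N2), and Ŷ = X¹ ⊕ N1 ⊕ Z ⊕ Q. Then I(U; YR) = 1 − h2(δ), I((X¹, X²); Ŷ | U, Z) = 1 − h2(δ ⋆ q), and I(YR; Ŷ | U, Z) = 1 − h2(q). In particular, if q = h2⁻¹(2 − h2(δ) − R1) for some R1 with 1 − h2(δ) ≤ R1 ≤ 2 − h2(δ), then I(U; YR) + I((X¹, X²); Ŷ | U, Z) = 2 − h2(δ) − h2(δ ⋆ h2⁻¹(2 − h2(δ) − R1)) and I(U; YR) + I(YR; Ŷ | U, Z) = R1. -/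
import Mathlib


open MeasureTheory

/-- Binary entropy function (base 2), with the convention `0 * log₂ 0 = 0`
(automatic since `Real.logb 2 0 = 0`). -/
noncomputable def h2 (p : ℝ) : ℝ :=
  -(p * Real.logb 2 p) - (1 - p) * Real.logb 2 (1 - p)

/-- Inverse of the binary entropy function: for `q ≥ 0`, the unique `r ∈ [0, 1/2]`
with `h2 r = q` (realized as the infimum of the solution set); `0` for `q < 0`. -/
noncomputable def h2inv (q : ℝ) : ℝ :=
  if q < 0 then 0 else sInf {r : ℝ | 0 ≤ r ∧ r ≤ 1 / 2 ∧ h2 r = q}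

/-- Binary convolution `a ⋆ b = a(1-b) + (1-a)b`. -/
def bconv (a b : ℝ) : ℝ := a * (1 - b) + (1 - a) * b

/-- Shannon entropy (base 2, in bits) of a random variable `X` with values in a
finite type, with respect to the measure `μ`. -/
noncomputable def H2 {Ω S : Type*} [MeasurableSpace Ω] [Fintype S]
    (μ : Measure Ω) (X : Ω → S) : ℝ :=
  -∑ s : S, (μ (X ⁻¹' {s})).toReal * Real.logb 2 (μ (X ⁻¹' {s})).toReal

/-- Mutual information (base 2, in bits): `I(X;Y) = H(X) + H(Y) - H(X,Y)`. -/
noncomputable def MI2 {Ω S T : Type*} [MeasurableSpace Ω] [Fintype S] [Fintype T]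
    (μ : Measure Ω) (X : Ω → S) (Y : Ω → T) : ℝ :=
  H2 μ X + H2 μ Y - H2 μ (fun ω => (X ω, Y ω))

/-- Conditional entropy (base 2, in bits): `H(X|W) = H(X,W) - H(W)`. -/
noncomputable def condH2 {Ω S T : Type*} [MeasurableSpace Ω] [Fintype S] [Fintype T]
    (μ : Measure Ω) (X : Ω → S) (W : Ω → T) : ℝ :=
  H2 μ (fun ω => (X ω, W ω)) - H2 μ W

/-- Conditional mutual information (base 2, in bits):
`I(X;Y|Z) = H(X|Z) + H(Y|Z) - H(X,Y|Z)`. -/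
noncomputable def condMI2 {Ω S T V : Type*} [MeasurableSpace Ω] [Fintype S] [Fintype T]
    [Fintype V] (μ : Measure Ω) (X : Ω → S) (Y : Ω → T) (Z : Ω → V) : ℝ :=
  condH2 μ X Z + condH2 μ Y Z - condH2 μ (fun ω => (X ω, Y ω)) Z

/-! ### Auxiliary machinery -/

/-- `ent2 x = -(x log₂ x)`, the building block of entropies. -/
noncomputable def ent2 (x : ℝ) : ℝ := -(x * Real.logb 2 x)

lemma ent2_mul (x y : ℝ) : ent2 (x * y) = y * ent2 x + x * ent2 y := by
  rcases eq_or_ne x 0 with h | h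
  · simp [ent2, h]
  rcases eq_or_ne y 0 with h' | h'
  · simp [ent2, h']
  simp only [ent2, Real.logb_mul h h']; ring

lemma ent2_zero : ent2 0 = 0 := by simp [ent2]

lemma ent2_half : ent2 ((2 : ℝ)⁻¹) = 2⁻¹ := by
  have : Real.logb 2 ((2 : ℝ)⁻¹) = -1 := by
    rw [Real.logb_inv, Real.logb_self_eq_one] <;> norm_num
  simp [ent2, this]

lemma h2_ent2 (p : ℝ) : h2 p = ent2 p + ent2 (1 - p) := by
  simp only [h2, ent2]; ring

/-- Bernoulli weight. -/
def bp (p : ℝ) (b : Bool) : ℝ := if b then p else 1 - p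

lemma H2_eq_sum_ent2 {Ω S : Type*} [MeasurableSpace Ω] [Fintype S]
    (μ : Measure Ω) (X : Ω → S) :
    H2 μ X = ∑ s : S, ent2 ((μ (X ⁻¹' {s})).toReal) := by
  simp [H2, ent2]

/-- Continuity of the binary entropy function. -/
lemma h2_cont : Continuous h2 := by
  have h1 : Continuous fun x : ℝ => x * Real.log x := Real.continuous_mul_log
  have : h2 = fun p => (-(p * Real.log p) - (1 - p) * Real.log (1 - p)) / Real.log 2 := by
    funext p; simp [h2, Real.logb]; ring
  rw [this]
  exact ((h1.neg).sub (h1.comp (continuous_const.sub continuous_id))).div_const _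

lemma h2_zero : h2 0 = 0 := by simp [h2]

lemma h2_half : h2 (1 / 2) = 1 := by
  have : Real.logb 2 (1 / 2) = -1 := by
    rw [one_div, Real.logb_inv, Real.logb_self_eq_one] <;> norm_num
  simp only [h2]
  norm_num [this]

lemma h2_h2inv {t : ℝ} (h0 : 0 ≤ t) (h1 : t ≤ 1) : h2 (h2inv t) = t := by
  have hne : ∃ r, 0 ≤ r ∧ r ≤ 1 / 2 ∧ h2 r = t := by
    have := intermediate_value_Icc (by norm_num : (0:ℝ) ≤ 1 / 2) h2_cont.continuousOn
    have hmem : t ∈ Set.Icc (h2 0) (h2 (1 / 2)) := by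
      rw [h2_zero, h2_half]; exact ⟨h0, h1⟩
    obtain ⟨r, hr, hrt⟩ := this hmem
    exact ⟨r, hr.1, hr.2, hrt⟩
  have hclosed : IsClosed {r : ℝ | 0 ≤ r ∧ r ≤ 1 / 2 ∧ h2 r = t} := by
    have : {r : ℝ | 0 ≤ r ∧ r ≤ 1 / 2 ∧ h2 r = t}
        = Set.Icc 0 (1 / 2) ∩ h2 ⁻¹' {t} := by
      ext r; simp [Set.mem_Icc, and_assoc]
    rw [this]
    exact isClosed_Icc.inter ((isClosed_singleton).preimage h2_cont)
  have hbdd : BddBelow {r : ℝ | 0 ≤ r ∧ r ≤ 1 / 2 ∧ h2 r = t} := ⟨0, fun r hr => hr.1⟩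
  have hmem := hclosed.csInf_mem hne hbdd
  have heq : h2inv t = sInf {r : ℝ | 0 ≤ r ∧ r ≤ 1 / 2 ∧ h2 r = t} := by
    rw [h2inv, if_neg (not_lt.2 h0)]
  rw [heq]
  exact hmem.2.2

/-- Master decomposition: the probability that a function of the six independent
bits takes a given value is the corresponding sum over atoms. -/
lemma master6 {Ω : Type*} [MeasurableSpace Ω] (μ : Measure Ω) [IsProbabilityMeasure μ]
    (X1 X2 N1 N2 Z Q : Ω → Bool)
    (hX1 : Measurable X1) (hX2 : Measurable X2) (hN1 : Measurable N1)
    (hN2 : Measurable N2) (hZ : Measurable Z) (hQ : Measurable Q)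
    (hindep : ∀ a b c d e f : Bool,
      (μ (X1 ⁻¹' {a} ∩ X2 ⁻¹' {b} ∩ N1 ⁻¹' {c} ∩ N2 ⁻¹' {d} ∩ Z ⁻¹' {e} ∩
          Q ⁻¹' {f})).toReal
        = (μ (X1 ⁻¹' {a})).toReal * (μ (X2 ⁻¹' {b})).toReal * (μ (N1 ⁻¹' {c})).toReal
          * (μ (N2 ⁻¹' {d})).toReal * (μ (Z ⁻¹' {e})).toReal * (μ (Q ⁻¹' {f})).toReal)
    {S : Type*} [DecidableEq S]
    (F : Bool → Bool → Bool → Bool → Bool → Bool → S)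
    (g : Ω → S) (hg : ∀ ω, g ω = F (X1 ω) (X2 ω) (N1 ω) (N2 ω) (Z ω) (Q ω)) (s : S) :
    (μ (g ⁻¹' {s})).toReal =
      ∑ a : Bool, ∑ b : Bool, ∑ c : Bool, ∑ d : Bool, ∑ e : Bool, ∑ f : Bool,
        (if F a b c d e f = s then
          (μ (X1 ⁻¹' {a})).toReal * (μ (X2 ⁻¹' {b})).toReal
            * (μ (N1 ⁻¹' {c})).toReal * (μ (N2 ⁻¹' {d})).toReal
            * (μ (Z ⁻¹' {e})).toReal * (μ (Q ⁻¹' {f})).toReal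
        else 0) := by
  classical
  rw [show (∑ a : Bool, ∑ b : Bool, ∑ c : Bool, ∑ d : Bool, ∑ e : Bool, ∑ f : Bool,
        (if F a b c d e f = s then
          (μ (X1 ⁻¹' {a})).toReal * (μ (X2 ⁻¹' {b})).toReal
            * (μ (N1 ⁻¹' {c})).toReal * (μ (N2 ⁻¹' {d})).toReal
            * (μ (Z ⁻¹' {e})).toReal * (μ (Q ⁻¹' {f})).toReal
        else 0))
      = ∑ v : Bool × Bool × Bool × Bool × Bool × Bool,
        (if F v.1 v.2.1 v.2.2.1 v.2.2.2.1 v.2.2.2.2.1 v.2.2.2.2.2 = s then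
          (μ (X1 ⁻¹' {v.1})).toReal * (μ (X2 ⁻¹' {v.2.1})).toReal
            * (μ (N1 ⁻¹' {v.2.2.1})).toReal * (μ (N2 ⁻¹' {v.2.2.2.1})).toReal
            * (μ (Z ⁻¹' {v.2.2.2.2.1})).toReal * (μ (Q ⁻¹' {v.2.2.2.2.2})).toReal
        else 0) from by
    simp only [Fintype.sum_prod_type]]
  set A : Bool × Bool × Bool × Bool × Bool × Bool → Set Ω := fun v =>
    X1 ⁻¹' {v.1} ∩ X2 ⁻¹' {v.2.1} ∩ N1 ⁻¹' {v.2.2.1} ∩ N2 ⁻¹' {v.2.2.2.1}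
      ∩ Z ⁻¹' {v.2.2.2.2.1} ∩ Q ⁻¹' {v.2.2.2.2.2} with hA
  have hmem : ∀ (ω : Ω) v, ω ∈ A v ↔ (X1 ω, X2 ω, N1 ω, N2 ω, Z ω, Q ω) = v := by
    intro ω v
    obtain ⟨a, b, c, d, e, f⟩ := v
    simp [hA, Prod.ext_iff, and_assoc]
  set t : Finset (Bool × Bool × Bool × Bool × Bool × Bool) :=
    Finset.univ.filter (fun v => F v.1 v.2.1 v.2.2.1 v.2.2.2.1 v.2.2.2.2.1 v.2.2.2.2.2 = s)
      with ht
  have hE : g ⁻¹' {s} = ⋃ v ∈ t, A v := by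
    ext ω
    simp only [Set.mem_preimage, Set.mem_singleton_iff, Set.mem_iUnion, ht,
      Finset.mem_filter, Finset.mem_univ, true_and, hg ω]
    constructor
    · intro h
      exact ⟨(X1 ω, X2 ω, N1 ω, N2 ω, Z ω, Q ω), h, (hmem ω _).2 rfl⟩
    · rintro ⟨v, hv, hω⟩
      have := (hmem ω v).1 hω
      rw [← this] at hv; exact hv
  have hdisj : (↑t : Set (Bool × Bool × Bool × Bool × Bool × Bool)).PairwiseDisjoint A := by
    intro v _ w _ hvw
    refine Set.disjoint_left.2 fun ω h1 h2 => hvw ?_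
    rw [← (hmem ω v).1 h1, ← (hmem ω w).1 h2]
  have hmeas : ∀ v ∈ t, MeasurableSet (A v) := by
    intro v _
    exact ((((((hX1 (measurableSet_singleton _)).inter (hX2 (measurableSet_singleton _))).inter
      (hN1 (measurableSet_singleton _))).inter (hN2 (measurableSet_singleton _))).inter
      (hZ (measurableSet_singleton _))).inter (hQ (measurableSet_singleton _)))
  rw [hE, measure_biUnion_finset hdisj hmeas,
    ENNReal.toReal_sum (fun v _ => measure_ne_top μ _), ht, Finset.sum_filter]
  refine Finset.sum_congr rfl fun v _ => ?_
  split
  · exact hindep v.1 v.2.1 v.2.2.1 v.2.2.2.1 v.2.2.2.2.1 v.2.2.2.2.2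
  · rfl

set_option maxHeartbeats 4000000 in
/-- Evaluation of the mutual information terms of the proposed pDCF scheme for
the parallel binary symmetric MRC-D: with `U = X²`,
`YR = (X¹ ⊕ N1 ⊕ Z, X² ⊕ N2)` and `Yh = X¹ ⊕ N1 ⊕ Z ⊕ Q`, one has
`I(U;YR) = 1 − h2(δ)`, `I((X¹,X²); Yh | U, Z) = 1 − h2(δ ⋆ q)` and
`I(YR; Yh | U, Z) = 1 − h2(q)`; in particular, for
`q = h2⁻¹(2 − h2(δ) − R1)` with `1 − h2(δ) ≤ R1 ≤ 2 − h2(δ)`, the pDCF rate is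
`2 − h2(δ) − h2(δ ⋆ h2⁻¹(2 − h2(δ) − R1))` and the constraint holds with
equality `= R1`. -/
theorem stmt14 {Ω : Type*} [MeasurableSpace Ω] (μ : Measure Ω) [IsProbabilityMeasure μ]
    (δ pz q : ℝ) (hδ : δ ∈ Set.Icc (0 : ℝ) (1 / 2)) (hpz : pz ∈ Set.Icc (0 : ℝ) 1)
    (hq : q ∈ Set.Icc (0 : ℝ) (1 / 2))
    (X1 X2 N1 N2 Z Q : Ω → Bool)
    (hX1 : Measurable X1) (hX2 : Measurable X2) (hN1 : Measurable N1)
    (hN2 : Measurable N2) (hZ : Measurable Z) (hQ : Measurable Q)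
    (hindep : ∀ a b c d e f : Bool,
      (μ (X1 ⁻¹' {a} ∩ X2 ⁻¹' {b} ∩ N1 ⁻¹' {c} ∩ N2 ⁻¹' {d} ∩ Z ⁻¹' {e} ∩
          Q ⁻¹' {f})).toReal
        = (μ (X1 ⁻¹' {a})).toReal * (μ (X2 ⁻¹' {b})).toReal * (μ (N1 ⁻¹' {c})).toReal
          * (μ (N2 ⁻¹' {d})).toReal * (μ (Z ⁻¹' {e})).toReal * (μ (Q ⁻¹' {f})).toReal)
    (hX1p : (μ (X1 ⁻¹' {true})).toReal = 1 / 2)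
    (hX2p : (μ (X2 ⁻¹' {true})).toReal = 1 / 2)
    (hN1p : (μ (N1 ⁻¹' {true})).toReal = δ)
    (hN2p : (μ (N2 ⁻¹' {true})).toReal = δ)
    (hZp : (μ (Z ⁻¹' {true})).toReal = pz)
    (hQp : (μ (Q ⁻¹' {true})).toReal = q) :
    MI2 μ X2 (fun ω => (X1 ω ^^ (N1 ω ^^ Z ω), X2 ω ^^ N2 ω)) = 1 - h2 δ ∧
    condMI2 μ (fun ω => (X1 ω, X2 ω)) (fun ω => X1 ω ^^ (N1 ω ^^ (Z ω ^^ Q ω)))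
        (fun ω => (X2 ω, Z ω)) = 1 - h2 (bconv δ q) ∧
    condMI2 μ (fun ω => (X1 ω ^^ (N1 ω ^^ Z ω), X2 ω ^^ N2 ω))
        (fun ω => X1 ω ^^ (N1 ω ^^ (Z ω ^^ Q ω)))
        (fun ω => (X2 ω, Z ω)) = 1 - h2 q ∧
    (∀ R1 : ℝ, 1 - h2 δ ≤ R1 → R1 ≤ 2 - h2 δ → q = h2inv (2 - h2 δ - R1) →
      MI2 μ X2 (fun ω => (X1 ω ^^ (N1 ω ^^ Z ω), X2 ω ^^ N2 ω))
          + condMI2 μ (fun ω => (X1 ω, X2 ω))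
              (fun ω => X1 ω ^^ (N1 ω ^^ (Z ω ^^ Q ω))) (fun ω => (X2 ω, Z ω))
        = 2 - h2 δ - h2 (bconv δ (h2inv (2 - h2 δ - R1))) ∧
      MI2 μ X2 (fun ω => (X1 ω ^^ (N1 ω ^^ Z ω), X2 ω ^^ N2 ω))
          + condMI2 μ (fun ω => (X1 ω ^^ (N1 ω ^^ Z ω), X2 ω ^^ N2 ω))
              (fun ω => X1 ω ^^ (N1 ω ^^ (Z ω ^^ Q ω))) (fun ω => (X2 ω, Z ω))
        = R1) := by
  classical
  have hcompl : ∀ (X : Ω → Bool), Measurable X →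
      (μ (X ⁻¹' {false})).toReal = 1 - (μ (X ⁻¹' {true})).toReal := by
    intro X hX
    have hs : X ⁻¹' {false} = (X ⁻¹' {true})ᶜ := by
      ext ω; cases h : X ω <;> simp [h]
    rw [hs, measure_compl (hX (measurableSet_singleton _)) (measure_ne_top μ _), measure_univ,
      ENNReal.toReal_sub_of_le prob_le_one (by simp)]
    simp
  have hX1f : (μ (X1 ⁻¹' {false})).toReal = 1 - (1 / 2 : ℝ) := by
    rw [hcompl X1 hX1, hX1p]
  have hX2f : (μ (X2 ⁻¹' {false})).toReal = 1 - (1 / 2 : ℝ) := by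
    rw [hcompl X2 hX2, hX2p]
  have hN1f : (μ (N1 ⁻¹' {false})).toReal = 1 - δ := by rw [hcompl N1 hN1, hN1p]
  have hN2f : (μ (N2 ⁻¹' {false})).toReal = 1 - δ := by rw [hcompl N2 hN2, hN2p]
  have hZf : (μ (Z ⁻¹' {false})).toReal = 1 - pz := by rw [hcompl Z hZ, hZp]
  have hQf : (μ (Q ⁻¹' {false})).toReal = 1 - q := by rw [hcompl Q hQ, hQp]
  have master : ∀ {S : Type} [DecidableEq S]
      (F : Bool → Bool → Bool → Bool → Bool → Bool → S)
      (g : Ω → S), (∀ ω, g ω = F (X1 ω) (X2 ω) (N1 ω) (N2 ω) (Z ω) (Q ω)) → ∀ (s : S),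
      (μ (g ⁻¹' {s})).toReal =
        ∑ a : Bool, ∑ b : Bool, ∑ c : Bool, ∑ d : Bool, ∑ e : Bool, ∑ f : Bool,
          (if F a b c d e f = s then
            (μ (X1 ⁻¹' {a})).toReal * (μ (X2 ⁻¹' {b})).toReal
              * (μ (N1 ⁻¹' {c})).toReal * (μ (N2 ⁻¹' {d})).toReal
              * (μ (Z ⁻¹' {e})).toReal * (μ (Q ⁻¹' {f})).toReal
          else 0) :=
    fun {S} _ F g hg s => master6 μ X1 X2 N1 N2 Z Q hX1 hX2 hN1 hN2 hZ hQ hindep F g hg s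
  -- probability computations
  have P1 : ∀ s : Bool, (μ (X2 ⁻¹' {s})).toReal = 2⁻¹ := by
    intro s
    cases s
    · rw [hX2f]; norm_num
    · rw [hX2p]; norm_num
  have P2 : ∀ y1 y2 : Bool,
      (μ ((fun ω => (X1 ω ^^ (N1 ω ^^ Z ω), X2 ω ^^ N2 ω)) ⁻¹' {(y1, y2)})).toReal
        = 2⁻¹ * 2⁻¹ := by
    intro y1 y2
    cases y1 <;> cases y2 <;>
    · rw [master (fun a b c d e f => (a ^^ (c ^^ e), b ^^ d))
        (fun ω => (X1 ω ^^ (N1 ω ^^ Z ω), X2 ω ^^ N2 ω)) (fun ω => rfl) _]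
      simp only [Fintype.sum_bool]
      simp (config := { decide := true }) only [hX1p, hX2p, hN1p, hN2p, hZp, hQp,
        hX1f, hX2f, hN1f, hN2f, hZf, hQf, if_true, if_false, ite_true, ite_false]
      try ring
  have P3 : ∀ b y1 y2 : Bool,
      (μ ((fun ω => (X2 ω, (X1 ω ^^ (N1 ω ^^ Z ω), X2 ω ^^ N2 ω))) ⁻¹'
          {(b, (y1, y2))})).toReal
        = 2⁻¹ * 2⁻¹ * bp δ (b ^^ y2) := by
    intro b y1 y2
    cases b <;> cases y1 <;> cases y2 <;>
    · rw [master (fun a b c d e f => (b, (a ^^ (c ^^ e), b ^^ d)))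
        (fun ω => (X2 ω, (X1 ω ^^ (N1 ω ^^ Z ω), X2 ω ^^ N2 ω))) (fun ω => rfl) _]
      simp only [Fintype.sum_bool]
      simp (config := { decide := true }) only [hX1p, hX2p, hN1p, hN2p, hZp, hQp,
        hX1f, hX2f, hN1f, hN2f, hZf, hQf, bp, if_true, if_false, ite_true, ite_false]
      try ring
  have P4 : ∀ b e : Bool,
      (μ ((fun ω => (X2 ω, Z ω)) ⁻¹' {(b, e)})).toReal = 2⁻¹ * bp pz e := by
    intro b e
    cases b <;> cases e <;>
    · rw [master (fun a b c d e f => (b, e)) (fun ω => (X2 ω, Z ω)) (fun ω => rfl) _]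
      simp only [Fintype.sum_bool]
      simp (config := { decide := true }) only [hX1p, hX2p, hN1p, hN2p, hZp, hQp,
        hX1f, hX2f, hN1f, hN2f, hZf, hQf, bp, if_true, if_false, ite_true, ite_false]
      try ring
  have P5 : ∀ a b b' e : Bool,
      (μ ((fun ω => ((X1 ω, X2 ω), (X2 ω, Z ω))) ⁻¹' {((a, b), (b', e))})).toReal
        = if b' = b then 2⁻¹ * 2⁻¹ * bp pz e else 0 := by
    intro a b b' e
    cases a <;> cases b <;> cases b' <;> cases e <;>
    · rw [master (fun a b c d e f => ((a, b), (b, e)))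
        (fun ω => ((X1 ω, X2 ω), (X2 ω, Z ω))) (fun ω => rfl) _]
      simp only [Fintype.sum_bool]
      simp (config := { decide := true }) only [hX1p, hX2p, hN1p, hN2p, hZp, hQp,
        hX1f, hX2f, hN1f, hN2f, hZf, hQf, bp, if_true, if_false, ite_true, ite_false]
      try ring
  have P6 : ∀ y b e : Bool,
      (μ ((fun ω => (X1 ω ^^ (N1 ω ^^ (Z ω ^^ Q ω)), (X2 ω, Z ω))) ⁻¹'
          {(y, (b, e))})).toReal
        = 2⁻¹ * 2⁻¹ * bp pz e := by
    intro y b e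
    cases y <;> cases b <;> cases e <;>
    · rw [master (fun a b c d e f => (a ^^ (c ^^ (e ^^ f)), (b, e)))
        (fun ω => (X1 ω ^^ (N1 ω ^^ (Z ω ^^ Q ω)), (X2 ω, Z ω))) (fun ω => rfl) _]
      simp only [Fintype.sum_bool]
      simp (config := { decide := true }) only [hX1p, hX2p, hN1p, hN2p, hZp, hQp,
        hX1f, hX2f, hN1f, hN2f, hZf, hQf, bp, if_true, if_false, ite_true, ite_false]
      try ring
  have P7 : ∀ a b y b' e : Bool,
      (μ ((fun ω => (((X1 ω, X2 ω), X1 ω ^^ (N1 ω ^^ (Z ω ^^ Q ω))), (X2 ω, Z ω))) ⁻¹'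
          {(((a, b), y), (b', e))})).toReal
        = if b' = b then 2⁻¹ * 2⁻¹ * bp pz e * bp (bconv δ q) (a ^^ (e ^^ y)) else 0 := by
    intro a b y b' e
    cases a <;> cases b <;> cases y <;> cases b' <;> cases e <;>
    · rw [master (fun a b c d e f => (((a, b), a ^^ (c ^^ (e ^^ f))), (b, e)))
        (fun ω => (((X1 ω, X2 ω), X1 ω ^^ (N1 ω ^^ (Z ω ^^ Q ω))), (X2 ω, Z ω))) (fun ω => rfl) _]
      simp only [Fintype.sum_bool]
      simp (config := { decide := true }) only [hX1p, hX2p, hN1p, hN2p, hZp, hQp,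
        hX1f, hX2f, hN1f, hN2f, hZf, hQf, bp, bconv, if_true, if_false, ite_true, ite_false]
      try ring
  have P8 : ∀ y1 y2 b e : Bool,
      (μ ((fun ω => ((X1 ω ^^ (N1 ω ^^ Z ω), X2 ω ^^ N2 ω), (X2 ω, Z ω))) ⁻¹'
          {((y1, y2), (b, e))})).toReal
        = 2⁻¹ * 2⁻¹ * bp pz e * bp δ (b ^^ y2) := by
    intro y1 y2 b e
    cases y1 <;> cases y2 <;> cases b <;> cases e <;>
    · rw [master (fun a b c d e f => ((a ^^ (c ^^ e), b ^^ d), (b, e)))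
        (fun ω => ((X1 ω ^^ (N1 ω ^^ Z ω), X2 ω ^^ N2 ω), (X2 ω, Z ω))) (fun ω => rfl) _]
      simp only [Fintype.sum_bool]
      simp (config := { decide := true }) only [hX1p, hX2p, hN1p, hN2p, hZp, hQp,
        hX1f, hX2f, hN1f, hN2f, hZf, hQf, bp, if_true, if_false, ite_true, ite_false]
      try ring
  have P9 : ∀ y1 y2 y b e : Bool,
      (μ ((fun ω => (((X1 ω ^^ (N1 ω ^^ Z ω), X2 ω ^^ N2 ω),
            X1 ω ^^ (N1 ω ^^ (Z ω ^^ Q ω))), (X2 ω, Z ω))) ⁻¹'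
          {(((y1, y2), y), (b, e))})).toReal
        = 2⁻¹ * 2⁻¹ * bp pz e * bp δ (b ^^ y2) * bp q (y1 ^^ y) := by
    intro y1 y2 y b e
    cases y1 <;> cases y2 <;> cases y <;> cases b <;> cases e <;>
    · rw [master (fun a b c d e f => (((a ^^ (c ^^ e), b ^^ d), a ^^ (c ^^ (e ^^ f))), (b, e)))
        (fun ω => (((X1 ω ^^ (N1 ω ^^ Z ω), X2 ω ^^ N2 ω), X1 ω ^^ (N1 ω ^^ (Z ω ^^ Q ω))), (X2 ω, Z ω))) (fun ω => rfl) _]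
      simp only [Fintype.sum_bool]
      simp (config := { decide := true }) only [hX1p, hX2p, hN1p, hN2p, hZp, hQp,
        hX1f, hX2f, hN1f, hN2f, hZf, hQf, bp, if_true, if_false, ite_true, ite_false]
      try ring
  -- entropy computations
  have hH1 : H2 μ X2 = 1 := by
    rw [H2_eq_sum_ent2]
    simp only [Fintype.sum_bool, P1, ent2_half]
    norm_num
  have hH2 : H2 μ (fun ω => (X1 ω ^^ (N1 ω ^^ Z ω), X2 ω ^^ N2 ω)) = 2 := by
    rw [H2_eq_sum_ent2]
    simp only [Fintype.sum_prod_type, Fintype.sum_bool, P2, ent2_mul, ent2_half]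
    norm_num
  have hH3 : H2 μ (fun ω => (X2 ω, (X1 ω ^^ (N1 ω ^^ Z ω), X2 ω ^^ N2 ω)))
      = 2 + h2 δ := by
    rw [H2_eq_sum_ent2]
    simp only [Fintype.sum_prod_type, Fintype.sum_bool, P3]
    simp (config := { decide := true }) only [bp, ite_true, ite_false, if_true, if_false]
    simp only [ent2_mul, ent2_half, h2_ent2]
    ring
  have hH4 : H2 μ (fun ω => (X2 ω, Z ω)) = 1 + h2 pz := by
    rw [H2_eq_sum_ent2]
    simp only [Fintype.sum_prod_type, Fintype.sum_bool, P4]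
    simp (config := { decide := true }) only [bp, ite_true, ite_false, if_true, if_false]
    simp only [ent2_mul, ent2_half, h2_ent2]
    ring
  have hH5 : H2 μ (fun ω => ((X1 ω, X2 ω), (X2 ω, Z ω))) = 2 + h2 pz := by
    rw [H2_eq_sum_ent2]
    simp only [Fintype.sum_prod_type, Fintype.sum_bool, P5]
    simp (config := { decide := true }) only [bp, ite_true, ite_false, if_true, if_false]
    simp only [ent2_mul, ent2_half, ent2_zero, h2_ent2]
    ring
  have hH6 : H2 μ (fun ω => (X1 ω ^^ (N1 ω ^^ (Z ω ^^ Q ω)), (X2 ω, Z ω)))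
      = 2 + h2 pz := by
    rw [H2_eq_sum_ent2]
    simp only [Fintype.sum_prod_type, Fintype.sum_bool, P6]
    simp (config := { decide := true }) only [bp, ite_true, ite_false, if_true, if_false]
    simp only [ent2_mul, ent2_half, h2_ent2]
    ring
  have hH7 : H2 μ (fun ω => (((X1 ω, X2 ω), X1 ω ^^ (N1 ω ^^ (Z ω ^^ Q ω))), (X2 ω, Z ω)))
      = 2 + h2 pz + h2 (bconv δ q) := by
    rw [H2_eq_sum_ent2]
    simp only [Fintype.sum_prod_type, Fintype.sum_bool, P7]
    simp (config := { decide := true }) only [bp, ite_true, ite_false, if_true, if_false]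
    simp only [ent2_mul, ent2_half, ent2_zero, h2_ent2]
    ring
  have hH8 : H2 μ (fun ω => ((X1 ω ^^ (N1 ω ^^ Z ω), X2 ω ^^ N2 ω), (X2 ω, Z ω)))
      = 2 + h2 pz + h2 δ := by
    rw [H2_eq_sum_ent2]
    simp only [Fintype.sum_prod_type, Fintype.sum_bool, P8]
    simp (config := { decide := true }) only [bp, ite_true, ite_false, if_true, if_false]
    simp only [ent2_mul, ent2_half, h2_ent2]
    ring
  have hH9 : H2 μ (fun ω => (((X1 ω ^^ (N1 ω ^^ Z ω), X2 ω ^^ N2 ω),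
        X1 ω ^^ (N1 ω ^^ (Z ω ^^ Q ω))), (X2 ω, Z ω)))
      = 2 + h2 pz + h2 δ + h2 q := by
    rw [H2_eq_sum_ent2]
    simp only [Fintype.sum_prod_type, Fintype.sum_bool, P9]
    simp (config := { decide := true }) only [bp, ite_true, ite_false, if_true, if_false]
    simp only [ent2_mul, ent2_half, h2_ent2]
    ring
  -- the three information quantities
  have c1 : MI2 μ X2 (fun ω => (X1 ω ^^ (N1 ω ^^ Z ω), X2 ω ^^ N2 ω)) = 1 - h2 δ := by
    simp only [MI2, hH1, hH2, hH3]
    ring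
  have c2 : condMI2 μ (fun ω => (X1 ω, X2 ω)) (fun ω => X1 ω ^^ (N1 ω ^^ (Z ω ^^ Q ω)))
      (fun ω => (X2 ω, Z ω)) = 1 - h2 (bconv δ q) := by
    simp only [condMI2, condH2, hH4, hH5, hH6, hH7]
    ring
  have c3 : condMI2 μ (fun ω => (X1 ω ^^ (N1 ω ^^ Z ω), X2 ω ^^ N2 ω))
      (fun ω => X1 ω ^^ (N1 ω ^^ (Z ω ^^ Q ω))) (fun ω => (X2 ω, Z ω)) = 1 - h2 q := by
    simp only [condMI2, condH2, hH4, hH6, hH8, hH9]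
    ring
  refine ⟨c1, c2, c3, ?_⟩
  intro R1 hR1l hR1u hq4
  have ht0 : 0 ≤ 2 - h2 δ - R1 := by linarith
  have ht1 : 2 - h2 δ - R1 ≤ 1 := by linarith
  have hqq : h2 q = 2 - h2 δ - R1 := by rw [hq4]; exact h2_h2inv ht0 ht1
  constructor
  · rw [c1, c2, ← hq4]; ring
  · rw [c1, c3]; linarith
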